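/- Fix integers n ≥ 2 and r−1 ≥ 1. For any λ ∈ ℤ^n and any 0 ≤ i ≤ n with s_i·λ ≠ λ, the (r−1)-quotient of s_i·λ equals λ^{quot}, or equals λ^{quot} + ϖ_j or λ^{quot} − ϖ_j for some 1 ≤ j ≤ n, where ϖ_j ∈ ℤ^n has first j entries equal to 1 and the rest equal to 0. Moreover for i = 0 the quotient is always unchanged: (s_0·λ)^{quot} = λ^{quot}. -/

import Mathlib

/-!
Every dot action preserves the relative order `≺` of the indices (for `s_i`, `0 < i < n`, after
relabelling the two swapped indices), so it acts position by position on the ordered sequence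
`i_1, …, i_n`. Here `p_m = ⌊g_m / (r-1)⌋` for the gap
`g_m = |λ_{i_m}| - |λ_{i_{m+1}}| - β_m`, and `β_m = 1` exactly when the tie-breaking rule would
put `i_{m+1}` before `i_m`.

A transposition `s_i` keeps all absolute values and changes the tie-breaking comparison only of
the two swapped indices. The reflection `s_n` keeps all absolute values too, and since `n` is the
largest index, the sign of `λ_n` does not affect how it is tie-broken against the other indices,
only against the sentinel `i_{n+1}`. So in both cases at most one `g_m` moves, by at most one, and
`λ^{quot}` moves by `0` or `±ϖ_j`. For `s_0` the entry `a ≥ 0` at index `1` becomes `-1 - a`: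
its absolute value grows by one, while in the tie-breaking order it goes from first place (a
nonnegative entry at the smallest index) to last place (a negative entry at the smallest index),
and the two effects cancel in every gap.
-/

open scoped Classical

namespace CCnDAHA

variable {n : ℕ}




/-- σ(λ)_i = +1 if λ_i ≥ 0, −1 otherwise. -/
def sgn (lam : Fin n → ℤ) (i : Fin n) : ℤ := if 0 ≤ lam i then 1 else -1

/-- `Prec lam i j` : index `i` strictly precedes `j` in the ordering i_1,…,i_n. -/
def Prec (lam : Fin n → ℤ) (i j : Fin n) : Prop :=
  |lam j| < |lam i| ∨
    (|lam i| = |lam j| ∧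
      ((0 ≤ lam i ∧ lam j < 0) ∨
       (0 ≤ lam i ∧ 0 ≤ lam j ∧ i < j) ∨
       (lam i < 0 ∧ lam j < 0 ∧ j < i)))

/-- 0-based position of index `i` in the ordering i_1,…,i_n (position m−1). -/
noncomputable def posOf (lam : Fin n → ℤ) (i : Fin n) : ℕ :=
  (Finset.univ.filter (fun j => Prec lam j i)).card

/-- ρ(λ)_i = σ(λ)_i · (n − m) where i = i_m. -/
noncomputable def rho (lam : Fin n → ℤ) (i : Fin n) : ℤ :=
  sgn lam i * ((n : ℤ) - 1 - (posOf lam i : ℤ))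

/-- (a,b)-neighborhood. -/
noncomputable def IsNbhd (a b : ℤ) (lam : Fin n → ℤ) (i j : Fin n) : Prop :=
  |rho lam i| - |rho lam j| = a - 1 ∧
  |lam i| - |lam j| ≤ b ∧
  (|lam i| - |lam j| = b →
    ((0 ≤ lam i ∧ 0 ≤ lam j ∧ j < i) ∨
     (lam i < 0 ∧ lam j < 0 ∧ i < j) ∨
     (lam i < 0 ∧ 0 ≤ lam j)))

/-- (a,b)-admissible: no (a,b)-neighborhood. -/
noncomputable def Admissible (a b : ℤ) (lam : Fin n → ℤ) : Prop :=
  ∀ i j, ¬ IsNbhd a b lam i j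

/-- number of (a,b)-neighborhoods. -/
noncomputable def nbhdCount (a b : ℤ) (lam : Fin n → ℤ) : ℕ :=
  ((Finset.univ : Finset (Fin n × Fin n)).filter (fun p => IsNbhd a b lam p.1 p.2)).card

/-- dot action of the affine simple reflection s_i (0 ≤ i ≤ n, 1-based paper indexing). -/
noncomputable def dotAct (i : ℕ) (lam : Fin n → ℤ) : Fin n → ℤ := fun j =>
  if i = 0 then (if (j : ℕ) = 0 then -1 - lam j else lam j)
  else if i = n then (if (j : ℕ) + 1 = n then -lam j else lam j)
  else if h1 : (j : ℕ) + 1 = i ∧ i < n then lam ⟨(j : ℕ) + 1, by omega⟩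
  else if h2 : (j : ℕ) = i then lam ⟨(j : ℕ) - 1, by have := j.isLt; omega⟩
  else lam j

/-- pairing ⟨λ, α_i⟩, for 0 ≤ i ≤ n. -/
noncomputable def pairing (i : ℕ) (lam : Fin n → ℤ) : ℤ :=
  if hn : n = 0 then 0
  else if i = 0 then -2 * lam ⟨0, by omega⟩
  else if i = n then 2 * lam ⟨n - 1, by omega⟩
  else lam ⟨(i - 1) % n, Nat.mod_lt _ (by omega)⟩ - lam ⟨i % n, Nat.mod_lt _ (by omega)⟩

/-- partial sum λ_1 + ⋯ + λ_j. -/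
def psum (lam : Fin n → ℤ) (j : Fin n) : ℤ :=
  ∑ i ∈ Finset.univ.filter (fun i => i ≤ j), lam i

/-- dominance order: μ ≤ λ. -/
def DomLE (mu lam : Fin n → ℤ) : Prop := ∀ j, psum mu j ≤ psum lam j

/-- λ⁺ : the weakly decreasing rearrangement of (|λ_1|,…,|λ_n|). -/
noncomputable def lamPlus (lam : Fin n → ℤ) : Fin n → ℤ := fun j =>
  ((Multiset.sort (Multiset.map (fun i => |lam i|) Finset.univ.val) (· ≤ ·)).reverse).getD (j : ℕ) 0

/-- λ ≻ μ. -/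
noncomputable def SuccOrd (lam mu : Fin n → ℤ) : Prop :=
  (DomLE (lamPlus mu) (lamPlus lam) ∧ lamPlus lam ≠ lamPlus mu) ∨
  (lamPlus lam = lamPlus mu ∧ DomLE mu lam ∧ lam ≠ mu)

/-- |λ_{i_m}|, with the sentinel value 0 at m = n+1. -/
noncomputable def absAt (lam : Fin n → ℤ) (m : ℕ) : ℤ :=
  if m = n + 1 then 0
  else ∑ i ∈ Finset.univ.filter (fun i => posOf lam i + 1 = m), |lam i|

/-- σ(λ)_{i_m}, with sentinel value +1 at m = n+1. -/
noncomputable def sgAt (lam : Fin n → ℤ) (m : ℕ) : ℤ :=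
  if m = n + 1 then 1
  else ∑ i ∈ Finset.univ.filter (fun i => posOf lam i + 1 = m), sgn lam i

/-- the (1-based) value of the index i_m, with sentinel value n+1 at m = n+1. -/
noncomputable def ixAt (lam : Fin n → ℤ) (m : ℕ) : ℕ :=
  if m = n + 1 then n + 1
  else ∑ i ∈ Finset.univ.filter (fun i => posOf lam i + 1 = m), ((i : ℕ) + 1)

/-- β_m ∈ {0,1}. -/
noncomputable def betaAt (lam : Fin n → ℤ) (m : ℕ) : ℤ :=
  if (sgAt lam m = 1 ∧ sgAt lam (m + 1) = 1 ∧ ixAt lam (m + 1) < ixAt lam m) ∨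
     (sgAt lam m = -1 ∧ sgAt lam (m + 1) = -1 ∧ ixAt lam m < ixAt lam (m + 1)) ∨
     (sgAt lam m = -1 ∧ sgAt lam (m + 1) = 1)
  then 1 else 0

/-- p_m = ⌊(|λ_{i_m}| − |λ_{i_{m+1}}| − β_m)/b⌋ (b plays the role of r−1). -/
noncomputable def pAt (b : ℤ) (lam : Fin n → ℤ) (m : ℕ) : ℤ :=
  Int.fdiv (absAt lam m - absAt lam (m + 1) - betaAt lam m) b

/-- the b-quotient λ^{quot} (b plays the role of r−1): j-th entry is p_j + ⋯ + p_n
(1-based j = (j:Fin n) + 1). -/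
noncomputable def quotOf (b : ℤ) (lam : Fin n → ℤ) : Fin n → ℤ := fun j =>
  ∑ m ∈ Finset.Icc ((j : ℕ) + 1) n, pAt b lam m

/-- fundamental weight ϖ_j (1-based j = (j : Fin n)+1): first j entries 1, rest 0. -/
def varpi (j : Fin n) : Fin n → ℤ := fun i => if i ≤ j then 1 else 0


/-- The tie-breaking order on indices `k`, `l` with `|λ_k| = |λ_l|`. -/
def TieBefore (lam : Fin n → ℤ) (k l : Fin n) : Prop :=
  (0 ≤ lam k ∧ lam l < 0) ∨ (0 ≤ lam k ∧ 0 ≤ lam l ∧ k < l) ∨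
    (lam k < 0 ∧ lam l < 0 ∧ l < k)

theorem prec_iff (lam : Fin n → ℤ) (k l : Fin n) :
    Prec lam k l ↔ |lam l| < |lam k| ∨ (|lam k| = |lam l| ∧ TieBefore lam k l) :=
  Iff.rfl

section Order

variable {lam : Fin n → ℤ}

theorem prec_irrefl (k : Fin n) : ¬ Prec lam k k := by
  unfold Prec; omega

theorem prec_trans {k l m : Fin n} (hkl : Prec lam k l) (hlm : Prec lam l m) : Prec lam k m := by
  unfold Prec at *; omega

theorem prec_or_prec_of_ne {k l : Fin n} (h : k ≠ l) : Prec lam k l ∨ Prec lam l k := by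
  rw [← Fin.val_ne_iff] at h
  unfold Prec; omega

theorem posOf_lt_posOf {k l : Fin n} (h : Prec lam k l) : posOf lam k < posOf lam l := by
  refine Finset.card_lt_card (Finset.ssubset_iff_of_subset ?_ |>.2 ⟨k, ?_, ?_⟩)
  · intro m hm
    simp only [Finset.mem_filter, Finset.mem_univ, true_and] at hm ⊢
    exact prec_trans hm h
  · simpa using h
  · simpa using prec_irrefl k

theorem posOf_lt (k : Fin n) : posOf lam k < n := by
  calc posOf lam k < (Finset.univ : Finset (Fin n)).card :=
        Finset.card_lt_card (Finset.filter_ssubset.2 ⟨k, Finset.mem_univ _, prec_irrefl k⟩)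
    _ = n := Finset.card_fin n

theorem posOf_injective : Function.Injective (posOf lam) := by
  intro k l h
  by_contra hkl
  rcases prec_or_prec_of_ne (lam := lam) hkl with h' | h' <;> have := posOf_lt_posOf h' <;> omega

theorem exists_posOf_eq {p : ℕ} (hp : p < n) : ∃ k, posOf lam k = p := by
  have hbij : Function.Bijective (fun k : Fin n => (⟨posOf lam k, posOf_lt k⟩ : Fin n)) :=
    Finite.injective_iff_bijective.1 fun k l h => posOf_injective (Fin.mk.inj h)
  obtain ⟨k, hk⟩ := hbij.2 ⟨p, hp⟩
  exact ⟨k, Fin.mk.inj hk⟩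

theorem posOf_comp {lam' : Fin n → ℤ} (σ : Equiv.Perm (Fin n))
    (h : ∀ k l, Prec lam' (σ k) (σ l) ↔ Prec lam k l) (k : Fin n) :
    posOf lam' (σ k) = posOf lam k := by
  unfold posOf
  rw [eq_comm, ← Finset.card_map σ.toEmbedding]
  congr 1
  ext l
  simp only [Finset.mem_map_equiv, Finset.mem_filter, Finset.mem_univ, true_and]
  rw [← h, Equiv.apply_symm_apply]

end Order

section Positions

variable {lam : Fin n → ℤ} {k l : Fin n} {m : ℕ}

theorem filter_posOf_succ_eq (hk : posOf lam k + 1 = m) :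
    Finset.univ.filter (fun i => posOf lam i + 1 = m) = {k} := by
  ext i
  simp only [Finset.mem_filter, Finset.mem_univ, true_and, Finset.mem_singleton]
  exact ⟨fun hi => posOf_injective (lam := lam) (by omega), fun hi => hi ▸ hk⟩

theorem ne_last_of_posOf (hk : posOf lam k + 1 = m) : m ≠ n + 1 := by
  have := posOf_lt (lam := lam) k
  omega

theorem absAt_of_posOf (hk : posOf lam k + 1 = m) : absAt lam m = |lam k| := by
  rw [absAt, if_neg (ne_last_of_posOf hk), filter_posOf_succ_eq hk, Finset.sum_singleton]

theorem sgAt_of_posOf (hk : posOf lam k + 1 = m) : sgAt lam m = sgn lam k := by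
  rw [sgAt, if_neg (ne_last_of_posOf hk), filter_posOf_succ_eq hk, Finset.sum_singleton]

theorem ixAt_of_posOf (hk : posOf lam k + 1 = m) : ixAt lam m = (k : ℕ) + 1 := by
  rw [ixAt, if_neg (ne_last_of_posOf hk), filter_posOf_succ_eq hk, Finset.sum_singleton]

theorem betaAt_of_posOf (hk : posOf lam k + 1 = m) (hl : posOf lam l = m) :
    betaAt lam m = if TieBefore lam l k then 1 else 0 := by
  rw [betaAt, sgAt_of_posOf hk, sgAt_of_posOf (show posOf lam l + 1 = m + 1 by omega),
    ixAt_of_posOf hk, ixAt_of_posOf (show posOf lam l + 1 = m + 1 by omega)]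
  unfold sgn TieBefore
  congr 1
  by_cases hk : 0 ≤ lam k <;> by_cases hl : 0 ≤ lam l <;> simp [hk, hl] <;> omega

theorem betaAt_of_posOf_last (hk : posOf lam k + 1 = n) :
    betaAt lam n = if lam k < 0 then 1 else 0 := by
  rw [betaAt, sgAt_of_posOf hk, ixAt_of_posOf hk, sgAt, if_pos rfl, ixAt, if_pos rfl]
  unfold sgn
  congr 1
  have := k.isLt
  by_cases hk : 0 ≤ lam k <;> simp [hk] <;> omega

end Positions

noncomputable def gapAt (lam : Fin n → ℤ) (m : ℕ) : ℤ :=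
  absAt lam m - absAt lam (m + 1) - betaAt lam m

theorem pAt_eq_fdiv (b : ℤ) (lam : Fin n → ℤ) (m : ℕ) :
    pAt b lam m = Int.fdiv (gapAt lam m) b :=
  rfl

noncomputable def pairGap (lam : Fin n → ℤ) (k l : Fin n) : ℤ :=
  |lam k| - |lam l| - if TieBefore lam l k then 1 else 0

noncomputable def lastGap (lam : Fin n → ℤ) (k : Fin n) : ℤ :=
  |lam k| - if lam k < 0 then 1 else 0

section Gap

variable {lam : Fin n → ℤ} {k l : Fin n} {m : ℕ}

theorem gapAt_of_posOf (hk : posOf lam k + 1 = m) (hl : posOf lam l = m) :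
    gapAt lam m = pairGap lam k l := by
  rw [gapAt, absAt_of_posOf hk, absAt_of_posOf (show posOf lam l + 1 = m + 1 by omega),
    betaAt_of_posOf hk hl, pairGap]

theorem gapAt_of_posOf_last (hk : posOf lam k + 1 = n) : gapAt lam n = lastGap lam k := by
  rw [gapAt, absAt_of_posOf hk, betaAt_of_posOf_last hk, absAt, if_pos rfl, sub_zero, lastGap]

end Gap

section Quotient

variable {b : ℤ} {lam lam' : Fin n → ℤ}

theorem quotOf_eq_of_gapAt_eq (h : ∀ m, 1 ≤ m → m ≤ n → gapAt lam' m = gapAt lam m) :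
    quotOf b lam' = quotOf b lam := by
  funext j
  refine Finset.sum_congr rfl fun m hm => ?_
  rw [Finset.mem_Icc] at hm
  rw [pAt_eq_fdiv, pAt_eq_fdiv, h m (by omega) hm.2]

theorem abs_fdiv_sub_fdiv_le_one (hb : 0 < b) {x y : ℤ} (h : |x - y| ≤ 1) :
    |Int.fdiv x b - Int.fdiv y b| ≤ 1 := by
  have hsucc : ∀ z : ℤ, (z + 1) / b ≤ z / b + 1 := fun z =>
    calc (z + 1) / b ≤ (z + 1 * b) / b := Int.ediv_le_ediv hb (by omega)
      _ = z / b + 1 := Int.add_mul_ediv_right z 1 hb.ne'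
  have h1 := hsucc x
  have h2 := hsucc y
  have h3 := Int.ediv_le_ediv hb (show x ≤ y + 1 by rw [abs_le] at h; omega)
  have h4 := Int.ediv_le_ediv hb (show y ≤ x + 1 by rw [abs_le] at h; omega)
  rw [Int.fdiv_eq_ediv_of_nonneg _ hb.le, Int.fdiv_eq_ediv_of_nonneg _ hb.le, abs_le]
  omega

theorem quotOf_eq_add_ite (p : Fin n)
    (h : ∀ m, 1 ≤ m → m ≤ n → m ≠ p + 1 → pAt b lam' m = pAt b lam m) (j : Fin n) :
    quotOf b lam' j =
      quotOf b lam j + if j ≤ p then pAt b lam' (p + 1) - pAt b lam (p + 1) else 0 := by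
  set d := pAt b lam' (p + 1) - pAt b lam (p + 1)
  have hp : ((p : ℕ) + 1 ∈ Finset.Icc ((j : ℕ) + 1) n) = (j ≤ p) := by
    rw [Finset.mem_Icc, Fin.le_def]
    exact propext (by omega)
  calc quotOf b lam' j
      = ∑ m ∈ Finset.Icc ((j : ℕ) + 1) n, (pAt b lam m + if m = p + 1 then d else 0) := by
        refine Finset.sum_congr rfl fun m hm => ?_
        rw [Finset.mem_Icc] at hm
        split_ifs with hm'
        · rw [hm']; ring
        · rw [h m (by omega) hm.2 hm', add_zero]
    _ = quotOf b lam j + if (p : ℕ) + 1 ∈ Finset.Icc ((j : ℕ) + 1) n then d else 0 := by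
        rw [Finset.sum_add_distrib, Finset.sum_ite_eq']
        rfl
    _ = _ := by simp only [hp]

theorem quotOf_eq_or_varpi (hb : 0 < b) (p : Fin n)
    (h : ∀ m, 1 ≤ m → m ≤ n → m ≠ p + 1 → gapAt lam' m = gapAt lam m)
    (hp : |gapAt lam' (p + 1) - gapAt lam (p + 1)| ≤ 1) :
    quotOf b lam' = quotOf b lam ∨
      ∃ j : Fin n, quotOf b lam' = quotOf b lam + varpi j ∨
        quotOf b lam' = quotOf b lam - varpi j := by
  have hquot := quotOf_eq_add_ite (b := b) (lam := lam) (lam' := lam') p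
    fun m h1 h2 hm => by rw [pAt_eq_fdiv, pAt_eq_fdiv, h m h1 h2 hm]
  have hd := Int.abs_le_one_iff.1 (abs_fdiv_sub_fdiv_le_one hb hp)
  rw [← pAt_eq_fdiv, ← pAt_eq_fdiv] at hd
  rcases hd with hd | hd | hd
  · exact Or.inl (funext fun j => by simp [hquot, hd])
  · exact Or.inr ⟨p, Or.inl (funext fun j => by simp [hquot, hd, varpi])⟩
  · refine Or.inr ⟨p, Or.inr (funext fun j => ?_)⟩
    simp only [hquot, hd, varpi, Pi.sub_apply]
    split_ifs <;> ring

end Quotient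

section Relabel

variable {lam lam' : Fin n → ℤ} {σ : Equiv.Perm (Fin n)}

theorem prec_comp_iff (habs : ∀ k, |lam' (σ k)| = |lam k|)
    (htie : ∀ k l, |lam k| = |lam l| → (TieBefore lam' (σ k) (σ l) ↔ TieBefore lam k l))
    (k l : Fin n) : Prec lam' (σ k) (σ l) ↔ Prec lam k l := by
  rw [prec_iff, prec_iff, habs, habs]
  exact or_congr Iff.rfl (and_congr_right (htie k l))

theorem absAt_comp (hprec : ∀ k l, Prec lam' (σ k) (σ l) ↔ Prec lam k l)
    (habs : ∀ k, |lam' (σ k)| = |lam k|) (m : ℕ) : absAt lam' m = absAt lam m := by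
  unfold absAt
  split_ifs
  · rfl
  · refine (Finset.sum_equiv σ (fun k => ?_) fun k _ => (habs k).symm).symm
    simp [posOf_comp σ hprec]

theorem abs_gapAt_sub_le_one (hprec : ∀ k l, Prec lam' (σ k) (σ l) ↔ Prec lam k l)
    (habs : ∀ k, |lam' (σ k)| = |lam k|) (m : ℕ) : |gapAt lam' m - gapAt lam m| ≤ 1 := by
  rw [gapAt, gapAt, absAt_comp hprec habs, absAt_comp hprec habs, abs_le]
  unfold betaAt
  split_ifs <;> omega

theorem gapAt_comp_eq (hprec : ∀ k l, Prec lam' (σ k) (σ l) ↔ Prec lam k l) {m : ℕ}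
    (hm1 : 1 ≤ m) (hmn : m ≤ n)
    (hpair : ∀ k l, posOf lam k + 1 = m → posOf lam l = m →
      pairGap lam' (σ k) (σ l) = pairGap lam k l)
    (hlast : m = n → ∀ k, posOf lam k + 1 = n → lastGap lam' (σ k) = lastGap lam k) :
    gapAt lam' m = gapAt lam m := by
  obtain ⟨k, hk⟩ := exists_posOf_eq (lam := lam) (show m - 1 < n by omega)
  have hk' : posOf lam' (σ k) + 1 = m := by rw [posOf_comp σ hprec]; omega
  rcases hmn.lt_or_eq with hmn | rfl
  · obtain ⟨l, hl⟩ := exists_posOf_eq (lam := lam) hmn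
    rw [gapAt_of_posOf hk' (show posOf lam' (σ l) = m by rw [posOf_comp σ hprec, hl]),
      gapAt_of_posOf (k := k) (by omega) hl, hpair k l (by omega) hl]
  · rw [gapAt_of_posOf_last hk', gapAt_of_posOf_last (k := k) (by omega),
      hlast rfl k (by omega)]

end Relabel

section Swap

variable {lam : Fin n → ℤ} {a c : Fin n}

theorem swap_lt_swap_iff (hac : (c : ℕ) = a + 1) {k l : Fin n} (h : ¬(k = a ∧ l = c))
    (h' : ¬(k = c ∧ l = a)) : Equiv.swap a c k < Equiv.swap a c l ↔ k < l := by
  rw [Equiv.swap_apply_def, Equiv.swap_apply_def]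
  simp only [Fin.ext_iff] at h h'
  split_ifs <;> simp only [Fin.ext_iff, Fin.lt_def] at * <;> omega

theorem tieBefore_comp_swap_iff (hac : (c : ℕ) = a + 1) {k l : Fin n} (h : ¬(k = a ∧ l = c))
    (h' : ¬(k = c ∧ l = a)) :
    TieBefore (lam ∘ Equiv.swap a c) (Equiv.swap a c k) (Equiv.swap a c l) ↔
      TieBefore lam k l := by
  unfold TieBefore
  simp only [Function.comp_apply, Equiv.swap_apply_self, swap_lt_swap_iff hac h h',
    swap_lt_swap_iff hac (fun h'' => h' h''.symm) (fun h'' => h h''.symm)]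

theorem prec_comp_swap_iff (hac : (c : ℕ) = a + 1) (hne : lam a ≠ lam c) (k l : Fin n) :
    Prec (lam ∘ Equiv.swap a c) (Equiv.swap a c k) (Equiv.swap a c l) ↔ Prec lam k l := by
  refine prec_comp_iff (fun x => by simp) (fun x y hxy => ?_) k l
  by_cases hpair : (x = a ∧ y = c) ∨ (x = c ∧ y = a)
  · -- equal absolute values but different entries: opposite signs, so the indices play no role
    have hxy' := abs_eq_abs.1 hxy
    rcases hpair with ⟨rfl, rfl⟩ | ⟨rfl, rfl⟩ <;>
      simp only [TieBefore, Function.comp_apply, Equiv.swap_apply_left,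
        Equiv.swap_apply_right] <;> omega
  · exact tieBefore_comp_swap_iff hac (fun h => hpair (Or.inl h)) fun h => hpair (Or.inr h)

theorem quotOf_comp_swap {b : ℤ} (hb : 0 < b) (hac : (c : ℕ) = a + 1) (hne : lam a ≠ lam c) :
    quotOf b (lam ∘ Equiv.swap a c) = quotOf b lam ∨
      ∃ j : Fin n, quotOf b (lam ∘ Equiv.swap a c) = quotOf b lam + varpi j ∨
        quotOf b (lam ∘ Equiv.swap a c) = quotOf b lam - varpi j := by
  have hprec := prec_comp_swap_iff hac hne
  have habs : ∀ k, |(lam ∘ Equiv.swap a c) (Equiv.swap a c k)| = |lam k| := fun k => by simp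
  let p : Fin n := ⟨min (posOf lam a) (posOf lam c), by have := posOf_lt (lam := lam) a; omega⟩
  refine quotOf_eq_or_varpi hb p (fun m hm1 hmn hmp => gapAt_comp_eq hprec hm1 hmn ?_ ?_)
    (abs_gapAt_sub_le_one hprec habs _)
  · intro k l hk hl
    have hlk : ¬(l = a ∧ k = c) ∧ ¬(l = c ∧ k = a) := by
      constructor <;> rintro ⟨rfl, rfl⟩ <;> simp only [p] at hmp <;> omega
    rw [pairGap, pairGap, habs, habs, tieBefore_comp_swap_iff hac hlk.1 hlk.2]
  · intro _ k _
    simp [lastGap]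

end Swap

section Last

variable {lam : Fin n → ℤ} {e : Fin n}

theorem tieBefore_update_last_iff (he : (e : ℕ) + 1 = n) (v : ℤ) (k l : Fin n) :
    TieBefore (Function.update lam e v) k l ↔ TieBefore lam k l := by
  have hcases : ∀ x : Fin n, ((x : ℕ) + 1 = n ∧ Function.update lam e v x = v) ∨
      ((x : ℕ) + 1 < n ∧ Function.update lam e v x = lam x) := by
    intro x
    rcases eq_or_ne x e with rfl | hx
    · exact Or.inl ⟨he, Function.update_self ..⟩
    · exact Or.inr ⟨by have := Fin.val_ne_of_ne hx; omega, Function.update_of_ne hx ..⟩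
  have hk := hcases k
  have hl := hcases l
  unfold TieBefore
  rcases eq_or_ne k l with rfl | hkl
  · omega
  · have := Fin.val_ne_of_ne hkl
    omega

theorem quotOf_update_neg_last {b : ℤ} (hb : 0 < b) (he : (e : ℕ) + 1 = n) :
    quotOf b (Function.update lam e (-lam e)) = quotOf b lam ∨
      ∃ j : Fin n, quotOf b (Function.update lam e (-lam e)) = quotOf b lam + varpi j ∨
        quotOf b (Function.update lam e (-lam e)) = quotOf b lam - varpi j := by
  have habs : ∀ k, |Function.update lam e (-lam e) (Equiv.refl _ k)| = |lam k| := by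
    intro k
    rcases eq_or_ne k e with rfl | hk <;> simp [*]
  have htie := tieBefore_update_last_iff (lam := lam) he (-lam e)
  have hprec := prec_comp_iff habs fun k l _ => htie k l
  refine quotOf_eq_or_varpi hb e (fun m hm1 hmn hmp => gapAt_comp_eq hprec hm1 hmn ?_ ?_)
    (abs_gapAt_sub_le_one hprec habs _)
  · intro k l _ _
    rw [pairGap, pairGap, habs, habs, Equiv.refl_apply, Equiv.refl_apply, htie]
  · intro hmn'
    omega

end Last

section First

variable {lam : Fin n → ℤ} {e : Fin n}

theorem update_first_apply_cases (he : (e : ℕ) = 0) (hpos : 0 ≤ lam e) (x : Fin n) :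
    ((x : ℕ) = 0 ∧ Function.update lam e (-1 - lam e) x = -1 - lam x ∧
        |Function.update lam e (-1 - lam e) x| = lam x + 1 ∧ |lam x| = lam x ∧ 0 ≤ lam x) ∨
      ((x : ℕ) ≠ 0 ∧ Function.update lam e (-1 - lam e) x = lam x ∧
        |Function.update lam e (-1 - lam e) x| = |lam x|) := by
  rcases eq_or_ne x e with rfl | hx
  · refine Or.inl ⟨he, Function.update_self .., ?_, abs_of_nonneg hpos, hpos⟩
    rw [Function.update_self, abs_of_neg (by omega)]
    ring
  · rw [Function.update_of_ne hx]
    exact Or.inr ⟨fun h => hx (Fin.ext (h.trans he.symm)), rfl, rfl⟩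

theorem prec_update_first_iff (he : (e : ℕ) = 0) (hpos : 0 ≤ lam e) (k l : Fin n) :
    Prec (Function.update lam e (-1 - lam e)) k l ↔ Prec lam k l := by
  have hk := update_first_apply_cases he hpos k
  have hl := update_first_apply_cases he hpos l
  unfold Prec
  omega

theorem pairGap_update_first (he : (e : ℕ) = 0) (hpos : 0 ≤ lam e) {k l : Fin n}
    (hkl : k ≠ l) :
    pairGap (Function.update lam e (-1 - lam e)) k l = pairGap lam k l := by
  have hk := update_first_apply_cases he hpos k
  have hl := update_first_apply_cases he hpos l
  have := Fin.val_ne_of_ne hkl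
  unfold pairGap TieBefore
  split_ifs <;> omega

theorem lastGap_update_first (he : (e : ℕ) = 0) (hpos : 0 ≤ lam e) (k : Fin n) :
    lastGap (Function.update lam e (-1 - lam e)) k = lastGap lam k := by
  have hk := update_first_apply_cases he hpos k
  unfold lastGap
  split_ifs <;> omega

theorem quotOf_update_first_of_nonneg (he : (e : ℕ) = 0) (hpos : 0 ≤ lam e) (b : ℤ) :
    quotOf b (Function.update lam e (-1 - lam e)) = quotOf b lam := by
  have hprec : ∀ k l, Prec (Function.update lam e (-1 - lam e)) (Equiv.refl _ k)
      (Equiv.refl _ l) ↔ Prec lam k l := prec_update_first_iff he hpos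
  refine quotOf_eq_of_gapAt_eq fun m hm1 hmn => gapAt_comp_eq hprec hm1 hmn ?_ ?_
  · intro k l hk hl
    have hkl : k ≠ l := by rintro rfl; omega
    exact pairGap_update_first he hpos hkl
  · intro _ k _
    exact lastGap_update_first he hpos k

theorem quotOf_update_first (he : (e : ℕ) = 0) (b : ℤ) :
    quotOf b (Function.update lam e (-1 - lam e)) = quotOf b lam := by
  rcases le_or_gt 0 (lam e) with hpos | hneg
  · exact quotOf_update_first_of_nonneg he hpos b
  · -- `s_0` is an involution, so the case `λ_e < 0` follows from the case `λ_e ≥ 0`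
    set lam' := Function.update lam e (-1 - lam e)
    have hlam' : lam' e = -1 - lam e := Function.update_self ..
    have hinv : Function.update lam' e (-1 - lam' e) = lam := by
      rw [hlam', show -1 - (-1 - lam e) = lam e by ring, Function.update_idem,
        Function.update_eq_self]
    have := quotOf_update_first_of_nonneg (lam := lam') he (by omega) b
    rw [hinv] at this
    exact this.symm

end First

section DotAction

variable {lam : Fin n → ℤ}

theorem dotAct_zero (e : Fin n) (he : (e : ℕ) = 0) :
    dotAct 0 lam = Function.update lam e (-1 - lam e) := by
  funext k
  rcases eq_or_ne k e with rfl | hk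
  · simp [dotAct, he]
  · have hk0 : (k : ℕ) ≠ 0 := fun h => hk (Fin.ext (h.trans he.symm))
    simp [dotAct, Function.update_of_ne hk, hk0]

theorem dotAct_last (hn : n ≠ 0) (e : Fin n) (he : (e : ℕ) + 1 = n) :
    dotAct n lam = Function.update lam e (-lam e) := by
  funext k
  rcases eq_or_ne k e with rfl | hk
  · simp [dotAct, hn, he]
  · have : (k : ℕ) + 1 ≠ n := fun h => hk (Fin.ext (by omega))
    simp [dotAct, hn, Function.update_of_ne hk, this]

theorem dotAct_of_pos_of_lt {i : ℕ} (hi0 : 0 < i) (hin : i < n) :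
    dotAct i lam = lam ∘ Equiv.swap ⟨i - 1, by omega⟩ ⟨i, hin⟩ := by
  funext k
  simp only [dotAct, Function.comp_apply, Equiv.swap_apply_def, Fin.ext_iff, hi0.ne',
    hin.ne, if_false]
  split_ifs <;> first | omega | (congr 1; ext; simp only; omega)

theorem quotOf_dotAct_zero (b : ℤ) : quotOf b (dotAct 0 lam) = quotOf b lam := by
  funext j
  rw [dotAct_zero ⟨0, j.pos⟩ rfl, quotOf_update_first rfl]

end DotAction

theorem stmt14_general (n : ℕ) (r : ℤ) (hr : 1 ≤ r - 1)
    (lam : Fin n → ℤ) (i : ℕ) (hi : i ≤ n) (hne : dotAct i lam ≠ lam) :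
    (quotOf (r - 1) (dotAct i lam) = quotOf (r - 1) lam ∨
      ∃ j : Fin n,
        quotOf (r - 1) (dotAct i lam) = quotOf (r - 1) lam + varpi j ∨
        quotOf (r - 1) (dotAct i lam) = quotOf (r - 1) lam - varpi j) ∧
    (i = 0 → quotOf (r - 1) (dotAct i lam) = quotOf (r - 1) lam) := by
  have hb : 0 < r - 1 := by omega
  rcases Nat.eq_zero_or_pos i with rfl | hi0
  · have h : quotOf (r - 1) (dotAct 0 lam) = quotOf (r - 1) lam := quotOf_dotAct_zero _
    exact ⟨Or.inl h, fun _ => h⟩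
  refine ⟨?_, fun h => absurd h hi0.ne'⟩
  rcases hi.lt_or_eq with hin | rfl
  · rw [dotAct_of_pos_of_lt hi0 hin] at hne ⊢
    exact quotOf_comp_swap hb (by simp only; omega)
      fun h => hne (funext (Equiv.apply_swap_eq_self h))
  · have he : ((⟨i - 1, by omega⟩ : Fin i) : ℕ) + 1 = i := Nat.sub_add_cancel hi0
    rw [dotAct_last hi0.ne' _ he]
    exact quotOf_update_neg_last hb he

/-- for s_i·λ ≠ λ, the (r−1)-quotient of s_i·λ equals λ^{quot}, or
λ^{quot} ± ϖ_j for some j; for i = 0 it is always unchanged. -/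
theorem stmt14 (n : ℕ) (hn : 2 ≤ n) (r : ℤ) (hr : 1 ≤ r - 1)
    (lam : Fin n → ℤ) (i : ℕ) (hi : i ≤ n) (hne : dotAct i lam ≠ lam) :
    (quotOf (r - 1) (dotAct i lam) = quotOf (r - 1) lam ∨
      ∃ j : Fin n,
        quotOf (r - 1) (dotAct i lam) = quotOf (r - 1) lam + varpi j ∨
        quotOf (r - 1) (dotAct i lam) = quotOf (r - 1) lam - varpi j) ∧
    (i = 0 → quotOf (r - 1) (dotAct i lam) = quotOf (r - 1) lam) :=
  stmt14_general n r hr lam i hi hne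

end CCnDAHA
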